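/- For any uniquely weighted election profile P, SV(P) = SV(P'), where P' is the restriction of P to the Smith set of P (the profile obtained by removing from all ballots every candidate outside the Smith set of P). -/
import Mathlib


/-- An election profile: a finite set of candidates and, for each voter,
a strict linear order (ballot) on the candidates.  `ballot v a b = true`
means that voter `v` ranks candidate `a` above candidate `b`. -/
structure Profile (C V : Type) [DecidableEq C] [Fintype V] where
  cands : Finset C
  ballot : V → C → C → Bool
  ballot_irrefl : ∀ v a, a ∈ cands → ballot v a a = false
  ballot_asymm_total : ∀ v a b, a ∈ cands → b ∈ cands → a ≠ b →
    (ballot v a b = true ↔ ¬ ballot v b a = true)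
  ballot_trans : ∀ v a b c, a ∈ cands → b ∈ cands → c ∈ cands →
    ballot v a b = true → ballot v b c = true → ballot v a c = true

variable {C V : Type} [DecidableEq C] [Fintype V]

/-- The margin of `a` vs. `b`: the number of voters ranking `a` above `b`
minus the number of voters ranking `b` above `a`. -/
def Profile.margin (P : Profile C V) (a b : C) : ℤ :=
  ((Finset.univ.filter fun v => P.ballot v a b = true).card : ℤ) -
  ((Finset.univ.filter fun v => P.ballot v b a = true).card : ℤ)

/-- The restriction of a profile to a subset `S` of the candidates. -/
def Profile.restrict (P : Profile C V) (S : Finset C) : Profile C V where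
  cands := P.cands ∩ S
  ballot := P.ballot
  ballot_irrefl := fun v a ha => P.ballot_irrefl v a (Finset.mem_inter.mp ha).1
  ballot_asymm_total := fun v a b ha hb => P.ballot_asymm_total v a b
    (Finset.mem_inter.mp ha).1 (Finset.mem_inter.mp hb).1
  ballot_trans := fun v a b c ha hb hc => P.ballot_trans v a b c
    (Finset.mem_inter.mp ha).1 (Finset.mem_inter.mp hb).1 (Finset.mem_inter.mp hc).1

/-- The profile `P₋B` obtained from `P` by removing candidate `b` from all ballots. -/
def Profile.remove (P : Profile C V) (b : C) : Profile C V :=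
  P.restrict (P.cands.erase b)

/-- Auxiliary, fuel-based definition of the Stable Voting winners. -/
def SVaux : ℕ → Profile C V → Set C
  | 0, P => ↑P.cands
  | n + 1, P =>
    if P.cands.card ≤ 1 then ↑P.cands
    else { a | ∃ b ∈ P.cands, b ≠ a ∧ a ∈ SVaux n (P.remove b) ∧
      ∀ x ∈ P.cands, ∀ y ∈ P.cands, x ≠ y → x ∈ SVaux n (P.remove y) →
        P.margin x y ≤ P.margin a b }

/-- The set of Stable Voting winners of a profile.  If there is a single
candidate, that candidate wins; otherwise `a` is a winner iff there is a
candidate `b ≠ a` such that `a` is a Stable Voting winner after removing `b`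
and the margin of `a` vs. `b` is maximal among margins of pairs `(x, y)` of
distinct candidates such that `x` is a Stable Voting winner after removing `y`. -/
def SV (P : Profile C V) : Set C := SVaux P.cands.card P

/-- `a` beats `b` head-to-head: the margin of `a` vs. `b` is positive. -/
def Profile.beats (P : Profile C V) (a b : C) : Prop := 0 < P.margin a b

/-- A Condorcet winner: a candidate beating every other candidate head-to-head. -/
def CondorcetWinner (P : Profile C V) (a : C) : Prop :=
  a ∈ P.cands ∧ ∀ b ∈ P.cands, b ≠ a → P.beats a b

/-- `S` is a nonempty set of candidates each of whose members beats each
nonmember head-to-head. -/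
def Dominant (P : Profile C V) (S : Finset C) : Prop :=
  S ⊆ P.cands ∧ S.Nonempty ∧ ∀ a ∈ S, ∀ b ∈ P.cands, b ∉ S → P.beats a b

/-- `S` is the Smith set of `P`: the smallest nonempty set of candidates each
of whose members beats each nonmember head-to-head. -/
def IsSmith (P : Profile C V) (S : Finset C) : Prop :=
  Dominant P S ∧ ∀ T, Dominant P T → S ⊆ T

/-- A profile is uniquely weighted if distinct ordered pairs of distinct
candidates have distinct margins. -/
def UniquelyWeighted (P : Profile C V) : Prop :=
  ∀ a b a' b', a ∈ P.cands → b ∈ P.cands → a' ∈ P.cands → b' ∈ P.cands →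
    a ≠ b → a' ≠ b' → (a, b) ≠ (a', b') → P.margin a b ≠ P.margin a' b'

/-- `a` is stable for SV in `P`: there is a candidate `b` whom `a` beats
head-to-head such that `a` is a Stable Voting winner in `P₋b`. -/
def StableFor (P : Profile C V) (a : C) : Prop :=
  ∃ b ∈ P.cands, P.beats a b ∧ a ∈ SV (P.remove b)

section Aux
variable {C V : Type} [DecidableEq C] [Fintype V]

open Finset

lemma profile_ext {P Q : Profile C V} (h1 : P.cands = Q.cands)
    (h2 : P.ballot = Q.ballot) : P = Q := by
  cases P; cases Q; dsimp at h1 h2; subst h1; subst h2; rfl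

lemma margin_rev (P : Profile C V) (a b : C) : P.margin b a = - P.margin a b := by
  simp [Profile.margin]

lemma remove_cands (P : Profile C V) (b : C) :
    (P.remove b).cands = P.cands.erase b := by
  simp [Profile.remove, Profile.restrict, Finset.inter_eq_right.mpr (Finset.erase_subset _ _)]

lemma remove_card {P : Profile C V} {b : C} (hb : b ∈ P.cands) :
    (P.remove b).cands.card = P.cands.card - 1 := by
  rw [remove_cands, Finset.card_erase_of_mem hb]

lemma margin_remove (P : Profile C V) (b : C) : (P.remove b).margin = P.margin := rfl

lemma margin_restrict (P : Profile C V) (S : Finset C) :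
    (P.restrict S).margin = P.margin := rfl

lemma uw_restrict {P : Profile C V} (hu : UniquelyWeighted P) (S : Finset C) :
    UniquelyWeighted (P.restrict S) := by
  intro a b a' b' ha hb ha' hb' h1 h2 h3
  exact hu a b a' b' (Finset.mem_inter.mp ha).1 (Finset.mem_inter.mp hb).1
    (Finset.mem_inter.mp ha').1 (Finset.mem_inter.mp hb').1 h1 h2 h3

lemma uw_remove {P : Profile C V} (hu : UniquelyWeighted P) (b : C) :
    UniquelyWeighted (P.remove b) := uw_restrict hu _

lemma margin_ne_zero {P : Profile C V} (hu : UniquelyWeighted P) {a b : C}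
    (ha : a ∈ P.cands) (hb : b ∈ P.cands) (hab : a ≠ b) : P.margin a b ≠ 0 := by
  intro h
  have := hu a b b a ha hb hb ha hab hab.symm (by simp [hab])
  rw [h, margin_rev, h] at this
  simp at this

lemma sv_small {P : Profile C V} (h : P.cands.card ≤ 1) : SV P = ↑P.cands := by
  rcases Nat.le_one_iff_eq_zero_or_eq_one.mp h with h0 | h1
  · unfold SV; rw [h0]; rw [SVaux]
  · have h2 : SV P = SVaux 1 P := by unfold SV; rw [h1]
    rw [h2]
    conv_lhs => rw [SVaux]
    rw [if_pos (by omega)]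

lemma svaux_succ : ∀ n (P : Profile C V), P.cands.card ≤ n →
    SVaux (n + 1) P = SVaux n P := by
  intro n
  induction n with
  | zero =>
    intro P hP
    conv_lhs => rw [SVaux]
    conv_rhs => rw [SVaux]
    rw [if_pos (by omega)]
  | succ n ih =>
    intro P hP
    by_cases h1 : P.cands.card ≤ 1
    · rw [SVaux, if_pos h1, SVaux, if_pos h1]
    · rw [SVaux, if_neg h1, SVaux, if_neg h1]
      have key : ∀ b ∈ P.cands, SVaux (n + 1) (P.remove b) = SVaux n (P.remove b) := by
        intro b hb
        exact ih _ (by rw [remove_card hb]; omega)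
      ext a
      simp only [Set.mem_setOf_eq]
      constructor
      · rintro ⟨b, hb, hba, hmem, hmax⟩
        exact ⟨b, hb, hba, (key b hb) ▸ hmem,
          fun x hx y hy hxy hmem' => hmax x hx y hy hxy ((key y hy) ▸ hmem')⟩
      · rintro ⟨b, hb, hba, hmem, hmax⟩
        exact ⟨b, hb, hba, (key b hb) ▸ hmem,
          fun x hx y hy hxy hmem' => hmax x hx y hy hxy ((key y hy) ▸ hmem')⟩

lemma svaux_eq_sv : ∀ n (P : Profile C V), P.cands.card ≤ n → SVaux n P = SV P := by
  intro n
  induction n with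
  | zero => intro P hP; unfold SV; rw [Nat.le_zero.mp hP]
  | succ n ih =>
    intro P hP
    rcases Nat.lt_or_ge P.cands.card (n+1) with h | h
    · rw [svaux_succ n P (by omega), ih P (by omega)]
    · have : P.cands.card = n + 1 := by omega
      unfold SV; rw [this]

lemma sv_spec {P : Profile C V} (h : 2 ≤ P.cands.card) :
    SV P = { a | ∃ b ∈ P.cands, b ≠ a ∧ a ∈ SV (P.remove b) ∧
      ∀ x ∈ P.cands, ∀ y ∈ P.cands, x ≠ y → x ∈ SV (P.remove y) →
        P.margin x y ≤ P.margin a b } := by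
  obtain ⟨m, hm⟩ : ∃ m, P.cands.card = m + 1 := ⟨P.cands.card - 1, by omega⟩
  have hm' : SV P = SVaux (m + 1) P := by unfold SV; rw [hm]
  rw [hm', SVaux, if_neg (by omega)]
  have key : ∀ b ∈ P.cands, SVaux m (P.remove b) = SV (P.remove b) := by
    intro b hb
    exact svaux_eq_sv m _ (by rw [remove_card hb]; omega)
  ext a
  simp only [Set.mem_setOf_eq]
  constructor
  · rintro ⟨b, hb, hba, hmem, hmax⟩
    exact ⟨b, hb, hba, (key b hb) ▸ hmem,
      fun x hx y hy hxy hmem' => hmax x hx y hy hxy ((key y hy) ▸ hmem')⟩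
  · rintro ⟨b, hb, hba, hmem, hmax⟩
    exact ⟨b, hb, hba, (key b hb) ▸ hmem,
      fun x hx y hy hxy hmem' => hmax x hx y hy hxy ((key y hy) ▸ hmem')⟩

lemma sv_subset : ∀ n (P : Profile C V), P.cands.card ≤ n → SV P ⊆ ↑P.cands := by
  intro n
  induction n with
  | zero => intro P hP; rw [sv_small (by omega)]
  | succ n ih =>
    intro P hP
    by_cases h1 : P.cands.card ≤ 1
    · rw [sv_small h1]
    · rw [sv_spec (by omega)]
      rintro a ⟨b, hb, hba, hmem, -⟩
      have := ih (P.remove b) (by rw [remove_card hb]; omega) hmem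
      rw [remove_cands] at this
      exact Finset.mem_of_mem_erase this

lemma sv_subset' (P : Profile C V) : SV P ⊆ ↑P.cands := sv_subset P.cands.card P le_rfl

lemma mem_erase_of_sv_remove {P : Profile C V} {a b : C} (h : a ∈ SV (P.remove b)) :
    a ∈ P.cands.erase b := by
  have := sv_subset' (P.remove b) h
  rwa [remove_cands] at this

lemma sv_nonempty : ∀ n (P : Profile C V), P.cands.card ≤ n → P.cands.Nonempty →
    (SV P).Nonempty := by
  intro n
  induction n with
  | zero =>
    intro P hP hne
    rw [sv_small (by omega)]
    exact ⟨hne.choose, hne.choose_spec⟩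
  | succ n ih =>
    intro P hP hne
    by_cases h1 : P.cands.card ≤ 1
    · rw [sv_small h1]; exact ⟨hne.choose, hne.choose_spec⟩
    · push_neg at h1
      classical
      -- feasible pairs
      set F : Finset (C × C) :=
        (P.cands ×ˢ P.cands).filter (fun p => p.1 ≠ p.2 ∧ p.1 ∈ SV (P.remove p.2)) with hF
      have hmemF : ∀ p : C × C, p ∈ F ↔
          p.1 ∈ P.cands ∧ p.2 ∈ P.cands ∧ p.1 ≠ p.2 ∧ p.1 ∈ SV (P.remove p.2) := by
        intro p
        simp [hF, Finset.mem_filter, Finset.mem_product, and_assoc]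
      have hFne : F.Nonempty := by
        obtain ⟨b, hb⟩ := hne
        have hrne : (P.remove b).cands.Nonempty := by
          rw [remove_cands]
          exact Finset.card_pos.mp (by rw [Finset.card_erase_of_mem hb]; omega)
        obtain ⟨a, ha⟩ := ih (P.remove b) (by rw [remove_card hb]; omega) hrne
        have ha' := mem_erase_of_sv_remove ha
        refine ⟨(a, b), (hmemF (a, b)).mpr ⟨Finset.mem_of_mem_erase ha', hb,
          Finset.ne_of_mem_erase ha', ha⟩⟩
      obtain ⟨p, hp, hmax⟩ := F.exists_max_image (fun p => P.margin p.1 p.2) hFne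
      obtain ⟨hp1, hp2, hp12, hpsv⟩ := (hmemF p).mp hp
      refine ⟨p.1, ?_⟩
      rw [sv_spec (by omega)]
      refine ⟨p.2, hp2, hp12.symm, hpsv, ?_⟩
      intro x hx y hy hxy hmem
      exact hmax (x, y) ((hmemF (x, y)).mpr ⟨hx, hy, hxy, hmem⟩)

lemma sv_nonempty' {P : Profile C V} (hne : P.cands.Nonempty) : (SV P).Nonempty :=
  sv_nonempty P.cands.card P le_rfl hne

lemma exists_sv_max {P : Profile C V} (h2 : 2 ≤ P.cands.card) :
    ∃ a b, a ∈ P.cands ∧ b ∈ P.cands ∧ a ≠ b ∧ a ∈ SV (P.remove b) ∧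
      ∀ x ∈ P.cands, ∀ y ∈ P.cands, x ≠ y → x ∈ SV (P.remove y) →
        P.margin x y ≤ P.margin a b := by
  classical
  set F : Finset (C × C) :=
    (P.cands ×ˢ P.cands).filter (fun p => p.1 ≠ p.2 ∧ p.1 ∈ SV (P.remove p.2)) with hF
  have hmemF : ∀ p : C × C, p ∈ F ↔
      p.1 ∈ P.cands ∧ p.2 ∈ P.cands ∧ p.1 ≠ p.2 ∧ p.1 ∈ SV (P.remove p.2) := by
    intro p
    simp [hF, Finset.mem_filter, Finset.mem_product, and_assoc]
  have hFne : F.Nonempty := by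
    obtain ⟨b, hb⟩ : P.cands.Nonempty := Finset.card_pos.mp (by omega)
    have hrne : (P.remove b).cands.Nonempty := by
      rw [remove_cands]
      exact Finset.card_pos.mp (by rw [Finset.card_erase_of_mem hb]; omega)
    obtain ⟨a, ha⟩ := sv_nonempty' hrne
    have ha' := mem_erase_of_sv_remove ha
    exact ⟨(a, b), (hmemF (a, b)).mpr ⟨Finset.mem_of_mem_erase ha', hb,
      Finset.ne_of_mem_erase ha', ha⟩⟩
  obtain ⟨p, hp, hmax⟩ := F.exists_max_image (fun p => P.margin p.1 p.2) hFne
  obtain ⟨hp1, hp2, hp12, hpsv⟩ := (hmemF p).mp hp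
  exact ⟨p.1, p.2, hp1, hp2, hp12, hpsv, fun x hx y hy hxy hmem =>
    hmax (x, y) ((hmemF (x, y)).mpr ⟨hx, hy, hxy, hmem⟩)⟩

lemma sv_eq_of_max {P : Profile C V} (h2 : 2 ≤ P.cands.card) (hu : UniquelyWeighted P)
    {a b : C} (ha : a ∈ P.cands) (hb : b ∈ P.cands) (hab : a ≠ b)
    (hsv : a ∈ SV (P.remove b))
    (hmax : ∀ x ∈ P.cands, ∀ y ∈ P.cands, x ≠ y → x ∈ SV (P.remove y) →
      P.margin x y ≤ P.margin a b) : SV P = {a} := by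
  ext a'
  rw [sv_spec h2]
  simp only [Set.mem_setOf_eq, Set.mem_singleton_iff]
  constructor
  · rintro ⟨b', hb', hb'a', hsv', hmax'⟩
    have ha'e := mem_erase_of_sv_remove hsv'
    have ha' : a' ∈ P.cands := Finset.mem_of_mem_erase ha'e
    have ha'b' : a' ≠ b' := Finset.ne_of_mem_erase ha'e
    have h1 : P.margin a' b' = P.margin a b :=
      le_antisymm (hmax a' ha' b' hb' ha'b' hsv') (hmax' a ha b hb hab hsv)
    by_contra hne
    exact hu a' b' a b ha' hb' ha hb ha'b' hab (by simp [hne]) h1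
  · rintro rfl
    exact ⟨b, hb, hab.symm, hsv, hmax⟩

lemma beats_asymm {P : Profile C V} {a b : C} (h : P.beats a b) : ¬ P.beats b a := by
  unfold Profile.beats at *
  rw [margin_rev]
  omega

lemma dominant_chain {P : Profile C V} {T₁ T₂ : Finset C}
    (h1 : Dominant P T₁) (h2 : Dominant P T₂) : T₁ ⊆ T₂ ∨ T₂ ⊆ T₁ := by
  by_contra h
  push_neg at h
  obtain ⟨t1, ht1, ht1'⟩ := Finset.not_subset.mp h.1
  obtain ⟨t2, ht2, ht2'⟩ := Finset.not_subset.mp h.2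
  exact beats_asymm (h1.2.2 t1 ht1 t2 (h2.1 ht2) ht2') (h2.2.2 t2 ht2 t1 (h1.1 ht1) ht1')

lemma exists_smith (P : Profile C V) (hne : P.cands.Nonempty) : ∃ S, IsSmith P S := by
  classical
  set D : Finset (Finset C) := P.cands.powerset.filter (fun T => Dominant P T) with hD
  have hcand : P.cands ∈ D := by
    rw [hD, Finset.mem_filter]
    exact ⟨Finset.mem_powerset_self _, le_rfl, hne, fun a ha b hb hb' => absurd hb hb'⟩
  obtain ⟨T₀, hT₀, hmin⟩ := D.exists_min_image Finset.card ⟨_, hcand⟩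
  have hT₀dom : Dominant P T₀ := (Finset.mem_filter.mp hT₀).2
  refine ⟨T₀, hT₀dom, fun T hT => ?_⟩
  rcases dominant_chain hT₀dom hT with h | h
  · exact h
  · have hTD : T ∈ D := Finset.mem_filter.mpr ⟨Finset.mem_powerset.mpr hT.1, hT⟩
    have := hmin T hTD
    rw [Finset.eq_of_subset_of_card_le h (hmin T hTD)]

lemma smith_unique {P : Profile C V} {S T : Finset C} (hS : IsSmith P S)
    (hT : IsSmith P T) : S = T :=
  Finset.Subset.antisymm (hS.2 T hT.1) (hT.2 S hS.1)

lemma smith_remove_notmem {P : Profile C V} {S : Finset C} {y : C}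
    (hS : IsSmith P S) (hy : y ∈ P.cands) (hyS : y ∉ S) : IsSmith (P.remove y) S := by
  obtain ⟨⟨hSc, hSne, hSb⟩, hSmin⟩ := hS
  have hd : Dominant (P.remove y) S := by
    refine ⟨?_, hSne, ?_⟩
    · rw [remove_cands]
      intro s hs
      exact Finset.mem_erase.mpr ⟨fun h => hyS (h ▸ hs), hSc hs⟩
    · intro a ha b hb hbS
      rw [remove_cands] at hb
      exact hSb a ha b (Finset.mem_of_mem_erase hb) hbS
  refine ⟨hd, fun T hT => ?_⟩
  rcases dominant_chain hd hT with h | hTS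
  · exact h
  · obtain ⟨hTc, hTne, hTb⟩ := hT
    rw [remove_cands] at hTc
    refine hSmin T ⟨fun t ht => Finset.mem_of_mem_erase (hTc ht), hTne, ?_⟩
    intro a ha b hb hbT
    by_cases hby : b = y
    · exact hby ▸ hSb a (hTS ha) y hy hyS
    · have hb' : b ∈ (P.remove y).cands := by
        rw [remove_cands]; exact Finset.mem_erase.mpr ⟨hby, hb⟩
      exact hTb a ha b hb' hbT

lemma restrict_self {P : Profile C V} {S : Finset C} (h : P.cands ⊆ S) :
    P.restrict S = P :=
  profile_ext (Finset.inter_eq_left.mpr h) rfl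

lemma remove_restrict_eq {P : Profile C V} {S : Finset C} {y : C} (hyS : y ∉ S) :
    (P.remove y).restrict S = P.restrict S := by
  refine profile_ext ?_ rfl
  ext a
  simp only [Profile.remove, Profile.restrict, Finset.mem_inter, Finset.mem_erase]
  constructor
  · rintro ⟨⟨h1, -⟩, h4⟩
    exact ⟨h1, h4⟩
  · rintro ⟨h1, h4⟩
    exact ⟨⟨h1, fun h => hyS (h ▸ h4), h1⟩, h4⟩

lemma restrict_remove_comm {P : Profile C V} {S T : Finset C} {y : C} (hTS : T ⊆ S) :
    (P.remove y).restrict T = ((P.restrict S).remove y).restrict T := by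
  refine profile_ext ?_ rfl
  ext a
  simp only [Profile.remove, Profile.restrict, Finset.mem_inter, Finset.mem_erase]
  constructor
  · rintro ⟨⟨h1, h2, -⟩, h4⟩
    exact ⟨⟨⟨h1, hTS h4⟩, h2, h1, hTS h4⟩, h4⟩
  · rintro ⟨⟨⟨h1, -⟩, h2, -⟩, h4⟩
    exact ⟨⟨h1, h2, h1⟩, h4⟩

end Aux

lemma sv_smith_main : ∀ n (P : Profile C V) (S : Finset C), P.cands.card ≤ n →
    UniquelyWeighted P → IsSmith P S → SV P = SV (P.restrict S) := by
  intro n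
  induction n using Nat.strong_induction_on with
  | _ n ih =>
  intro P S hn hu hS
  obtain ⟨⟨hSc, hSne, hSb⟩, hSmin⟩ := id hS
  by_cases hall : P.cands ⊆ S
  · rw [restrict_self hall]
  · obtain ⟨c, hc, hcS⟩ := Finset.not_subset.mp hall
    obtain ⟨s₀, hs₀⟩ := hSne
    have h2 : 2 ≤ P.cands.card := Finset.one_lt_card.mpr
      ⟨s₀, hSc hs₀, c, hc, fun h => hcS (h ▸ hs₀)⟩
    set Q := P.restrict S with hQdef
    have hQc : Q.cands = S := Finset.inter_eq_right.mpr hSc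
    have hQu : UniquelyWeighted Q := uw_restrict hu S
    have star : ∀ y ∈ P.cands, y ∉ S → SV (P.remove y) = SV Q := by
      intro y hy hyS
      have := ih (n - 1) (by omega) (P.remove y) S (by rw [remove_card hy]; omega)
        (uw_remove hu y) (smith_remove_notmem hS hy hyS)
      rw [this, remove_restrict_eq hyS]
    by_cases h2S : 2 ≤ S.card
    · have hQ2 : 2 ≤ Q.cands.card := by rw [hQc]; exact h2S
      have starstar : ∀ y ∈ S, SV (P.remove y) = SV (Q.remove y) := by
        intro y hyS
        have hy : y ∈ P.cands := hSc hyS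
        have hrne : (P.remove y).cands.Nonempty := by
          rw [remove_cands]
          exact Finset.card_pos.mp (by rw [Finset.card_erase_of_mem hy]; omega)
        obtain ⟨T, hT⟩ := exists_smith (P.remove y) hrne
        have hdomE : Dominant (P.remove y) (S.erase y) := by
          refine ⟨?_, ?_, ?_⟩
          · rw [remove_cands]
            exact Finset.erase_subset_erase y hSc
          · exact Finset.card_pos.mp (by rw [Finset.card_erase_of_mem hyS]; omega)
          · intro a ha b hb hbS
            rw [remove_cands] at hb
            have hbS' : b ∉ S := fun h =>
              hbS (Finset.mem_erase.mpr ⟨(Finset.mem_erase.mp hb).1, h⟩)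
            exact hSb a (Finset.mem_of_mem_erase ha) b (Finset.mem_of_mem_erase hb) hbS'
        have hTsub : T ⊆ S.erase y := hT.2 _ hdomE
        have hTS : T ⊆ S := hTsub.trans (Finset.erase_subset _ _)
        have e1 : SV (P.remove y) = SV ((P.remove y).restrict T) :=
          ih (n - 1) (by omega) (P.remove y) T (by rw [remove_card hy]; omega)
            (uw_remove hu y) hT
        have hQrc : (Q.remove y).cands = S.erase y := by rw [remove_cands, hQc]
        have hT' : IsSmith (Q.remove y) T := by
          constructor
          · refine ⟨?_, hT.1.2.1, ?_⟩
            · rw [hQrc]; exact hTsub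
            · intro a ha b hb hbT
              rw [hQrc] at hb
              have hb' : b ∈ (P.remove y).cands := by
                rw [remove_cands]
                exact Finset.erase_subset_erase y hSc hb
              exact hT.1.2.2 a ha b hb' hbT
          · intro U hU
            refine hT.2 U ⟨?_, hU.2.1, ?_⟩
            · rw [remove_cands]
              exact (hQrc ▸ hU.1).trans (Finset.erase_subset_erase y hSc)
            · intro u huU b hb hbU
              rw [remove_cands] at hb
              by_cases hbS : b ∈ S
              · have : b ∈ (Q.remove y).cands := by
                  rw [hQrc]
                  exact Finset.mem_erase.mpr ⟨(Finset.mem_erase.mp hb).1, hbS⟩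
                exact hU.2.2 u huU b this hbU
              · have huS : u ∈ S := Finset.mem_of_mem_erase (hQrc ▸ hU.1 huU)
                exact hSb u huS b (Finset.mem_of_mem_erase hb) hbS
        have hScard : S.card ≤ P.cands.card := Finset.card_le_card hSc
        have e2 : SV (Q.remove y) = SV ((Q.remove y).restrict T) :=
          ih (n - 1) (by omega) (Q.remove y) T
            (by rw [hQrc, Finset.card_erase_of_mem hyS]; omega)
            (uw_remove hQu y) hT'
        rw [e1, e2, restrict_remove_comm hTS]
      obtain ⟨a, b, ha, hb, hab, hsv, hmax⟩ := exists_sv_max h2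
      obtain ⟨aq, bq, haq, hbq, haqbq, hsvq, hmaxq⟩ := exists_sv_max hQ2
      rw [sv_eq_of_max h2 hu ha hb hab hsv hmax,
        sv_eq_of_max hQ2 hQu haq hbq haqbq hsvq hmaxq]
      suffices h : a = aq by rw [h]
      have haqS : aq ∈ S := hQc ▸ haq
      have hbqS : bq ∈ S := hQc ▸ hbq
      by_cases hbS : b ∈ S
      · have h1 : a ∈ SV (Q.remove b) := (starstar b hbS) ▸ hsv
        have haQ : a ∈ Q.cands := Finset.mem_of_mem_erase (mem_erase_of_sv_remove h1)
        have hm1 : P.margin a b ≤ P.margin aq bq := hmaxq a haQ b (hQc ▸ hbS) hab h1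
        have h2' : aq ∈ SV (P.remove bq) := (starstar bq hbqS).symm ▸ hsvq
        have hm2 : P.margin aq bq ≤ P.margin a b :=
          hmax aq (hSc haqS) bq (hSc hbqS) haqbq h2'
        by_contra hne
        exact hu a b aq bq ha hb (hSc haqS) (hSc hbqS) hab haqbq
          (by simp [hne]) (le_antisymm hm1 hm2)
      · have := star b hb hbS
        rw [this, sv_eq_of_max hQ2 hQu haq hbq haqbq hsvq hmaxq] at hsv
        exact hsv
    · have h1S : S.card = 1 := by
        have := Finset.card_pos.mpr ⟨s₀, hs₀⟩
        omega
      obtain ⟨w, rfl⟩ := Finset.card_eq_one.mp h1S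
      have hw : w ∈ P.cands := hSc (Finset.mem_singleton_self w)
      have hSVQ : SV Q = {w} := by
        rw [sv_small (by rw [hQc]; simp), hQc]
        simp
      rw [hSVQ]
      obtain ⟨a, b, ha, hb, hab, hsv, hmax⟩ := exists_sv_max h2
      rw [sv_eq_of_max h2 hu ha hb hab hsv hmax]
      suffices h : a = w by rw [h]
      have hcw : c ≠ w := fun h => hcS (h ▸ Finset.mem_singleton_self w)
      have hwc : w ∈ SV (P.remove c) := by
        rw [star c hc hcS, hSVQ]
        exact rfl
      have hpos : 0 < P.margin w c := hSb w (Finset.mem_singleton_self w) c hc hcS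
      have hge : P.margin w c ≤ P.margin a b :=
        hmax w hw c hc (fun h => hcw h.symm) hwc
      have hbw : b ≠ w := by
        rintro rfl
        have haw : a ∉ ({b} : Finset C) := fun h => hab (Finset.mem_singleton.mp h)
        have hba : 0 < P.margin b a := hSb b (Finset.mem_singleton_self b) a ha haw
        have : P.margin a b < 0 := by rw [margin_rev] at hba; omega
        omega
      have hbS : b ∉ ({w} : Finset C) := fun h => hbw (Finset.mem_singleton.mp h)
      rw [star b hb hbS, hSVQ] at hsv
      exact hsv
/-- For a uniquely weighted profile, the Stable Voting winners
coincide with the Stable Voting winners of the restriction of the profile to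
its Smith set. -/
theorem sv_eq_sv_restrict_smith (P : Profile C V) (S : Finset C)
    (hu : UniquelyWeighted P) (hS : IsSmith P S) :
    SV P = SV (P.restrict S) := by
  exact sv_smith_main P.cands.card P S le_rfl hu hS
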